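/- Let n be a positive integer, let D₀ and D be n×n complex Hermitian positive definite matrices, and let u ∈ ℂ^n be nonzero. Define F₀ = D₀⁻¹ u (u^H D₀⁻¹ u)⁻¹ u^H D₀⁻¹. Then u^H D⁻¹ u and u^H D₀⁻¹ u are positive reals, tr(F₀ (D − D₀)) is real, and log(u^H D⁻¹ u) ≥ log(u^H D₀⁻¹ u) − tr(F₀ (D − D₀)), with equality when D = D₀. -/

import Mathlib

/-!
Put `b = uᴴD₀⁻¹u`, `v = D₀⁻¹u` and `s = vᴴDv`. Then `tr(F₀(D − D₀)) = (s − b)/b`, and the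
Cauchy–Schwarz inequality for the inner product `⟪x, y⟫ = xᴴDy`, applied to `v` and `D⁻¹u`, gives
`b² = |vᴴu|² ≤ s · uᴴD⁻¹u`. With `x = b / uᴴD⁻¹u ≤ s / b`, the bound is `log x ≤ x − 1`.
-/

open Matrix
open scoped ComplexOrder

section

variable {n : Type*} [Fintype n]

theorem Matrix.PosSemidef.norm_sq_dotProduct_mulVec_le {𝕜 : Type*} [RCLike 𝕜] {M : Matrix n n 𝕜}
    (hM : M.PosSemidef) (x y : n → 𝕜) :
    ‖star x ⬝ᵥ M *ᵥ y‖ ^ 2 ≤ RCLike.re (star x ⬝ᵥ M *ᵥ x) * RCLike.re (star y ⬝ᵥ M *ᵥ y) := by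
  let _ := M.toSeminormedAddCommGroup hM
  let _ := M.toInnerProductSpace hM
  have h := inner_mul_inner_self_le (𝕜 := 𝕜) x y
  rw [norm_inner_symm y x, ← sq] at h
  rw [dotProduct_comm, dotProduct_comm (star x), dotProduct_comm (star y)]
  exact h

theorem Matrix.trace_vecMulVec_mul {α : Type*} [CommSemiring α] (x y : n → α) (M : Matrix n n α) :
    (vecMulVec x y * M).trace = y ⬝ᵥ M *ᵥ x := by
  rw [vecMulVec_mul, trace_vecMulVec, dotProduct_comm, dotProduct_mulVec]

variable [DecidableEq n]

theorem Matrix.IsHermitian.star_inv_mulVec_dotProduct {α : Type*} [CommRing α] [StarRing α]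
    {A : Matrix n n α} (hA : A.IsHermitian) (u : n → α) :
    star (A⁻¹ *ᵥ u) ⬝ᵥ u = star u ⬝ᵥ A⁻¹ *ᵥ u := by
  rw [star_mulVec, hA.inv.eq, dotProduct_mulVec]

theorem Matrix.IsHermitian.star_inv_mulVec_dotProduct_mulVec_inv_mulVec {α : Type*} [CommRing α]
    [StarRing α] {A : Matrix n n α} (hA : A.IsHermitian) (hA' : IsUnit A.det) (u : n → α) :
    star (A⁻¹ *ᵥ u) ⬝ᵥ A *ᵥ (A⁻¹ *ᵥ u) = star u ⬝ᵥ A⁻¹ *ᵥ u := by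
  rw [mulVec_mulVec, mul_nonsing_inv _ hA', one_mulVec, hA.star_inv_mulVec_dotProduct]

theorem Matrix.IsHermitian.trace_smul_vecMulVec_inv_mulVec_mul_sub {α : Type*} [CommRing α]
    [StarRing α] {A : Matrix n n α} (hA : A.IsHermitian) (hA' : IsUnit A.det) (c : α) (u : n → α)
    (B : Matrix n n α) :
    (c • vecMulVec (A⁻¹ *ᵥ u) (star u ᵥ* A⁻¹) * (B - A)).trace =
      c * (star (A⁻¹ *ᵥ u) ⬝ᵥ B *ᵥ (A⁻¹ *ᵥ u) - star u ⬝ᵥ A⁻¹ *ᵥ u) := by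
  have hrow : star u ᵥ* A⁻¹ = star (A⁻¹ *ᵥ u) := by rw [star_mulVec, hA.inv.eq]
  rw [hrow, smul_mul, trace_smul, trace_vecMulVec_mul, sub_mulVec, dotProduct_sub,
    hA.star_inv_mulVec_dotProduct_mulVec_inv_mulVec hA', smul_eq_mul]

theorem Matrix.PosDef.norm_sq_dotProduct_le {𝕜 : Type*} [RCLike 𝕜] {M : Matrix n n 𝕜}
    (hM : M.PosDef) (x y : n → 𝕜) :
    ‖star x ⬝ᵥ y‖ ^ 2 ≤ RCLike.re (star x ⬝ᵥ M *ᵥ x) * RCLike.re (star y ⬝ᵥ M⁻¹ *ᵥ y) := by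
  have hdet := (isUnit_iff_isUnit_det M).1 hM.isUnit
  have h := hM.posSemidef.norm_sq_dotProduct_mulVec_le x (M⁻¹ *ᵥ y)
  rwa [mulVec_mulVec, mul_nonsing_inv _ hdet, one_mulVec,
    hM.isHermitian.star_inv_mulVec_dotProduct] at h

end

theorem Real.log_sub_inv_mul_sub_le_log {a b s : ℝ} (ha : 0 < a) (hb : 0 < b)
    (h : b ^ 2 ≤ s * a) : Real.log b - b⁻¹ * (s - b) ≤ Real.log a := by
  have hba : b / a ≤ s / b := by
    rw [div_le_div_iff₀ ha hb]
    linarith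
  have hlog := Real.log_le_sub_one_of_pos (div_pos hb ha)
  rw [Real.log_div hb.ne' ha.ne'] at hlog
  have : b⁻¹ * (s - b) = s / b - 1 := by field_simp
  linarith

theorem mm_log_quadratic_form_lower_bound_general
    (n : ℕ)
    (D₀ D : Matrix (Fin n) (Fin n) ℂ)
    (hD₀ : D₀.PosDef) (hD : D.PosDef)
    (u : Fin n → ℂ) (hu : u ≠ 0)
    (F₀ : Matrix (Fin n) (Fin n) ℂ)
    (hF₀ : F₀ = (star u ⬝ᵥ D₀⁻¹ *ᵥ u)⁻¹ • vecMulVec (D₀⁻¹ *ᵥ u) (star u ᵥ* D₀⁻¹)) :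
    (star u ⬝ᵥ D⁻¹ *ᵥ u).im = 0 ∧ 0 < (star u ⬝ᵥ D⁻¹ *ᵥ u).re ∧
    (star u ⬝ᵥ D₀⁻¹ *ᵥ u).im = 0 ∧ 0 < (star u ⬝ᵥ D₀⁻¹ *ᵥ u).re ∧
    ((F₀ * (D - D₀)).trace).im = 0 ∧
    Real.log (star u ⬝ᵥ D⁻¹ *ᵥ u).re ≥
      Real.log (star u ⬝ᵥ D₀⁻¹ *ᵥ u).re - ((F₀ * (D - D₀)).trace).re ∧
    (D = D₀ →
      Real.log (star u ⬝ᵥ D⁻¹ *ᵥ u).re =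
        Real.log (star u ⬝ᵥ D₀⁻¹ *ᵥ u).re - ((F₀ * (D - D₀)).trace).re) := by
  obtain ⟨ha_re, ha_im⟩ := Complex.pos_iff.1 (hD.inv.dotProduct_mulVec_pos hu)
  obtain ⟨hb_re, hb_im⟩ := Complex.pos_iff.1 (hD₀.inv.dotProduct_mulVec_pos hu)
  have hs_im := (Complex.nonneg_iff.1 (hD.posSemidef.dotProduct_mulVec_nonneg (D₀⁻¹ *ᵥ u))).2
  have hb : ((star u ⬝ᵥ D₀⁻¹ *ᵥ u).re : ℂ) = star u ⬝ᵥ D₀⁻¹ *ᵥ u := Complex.ext rfl (by simp [hb_im])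
  have hs : ((star (D₀⁻¹ *ᵥ u) ⬝ᵥ D *ᵥ (D₀⁻¹ *ᵥ u)).re : ℂ) =
      star (D₀⁻¹ *ᵥ u) ⬝ᵥ D *ᵥ (D₀⁻¹ *ᵥ u) := Complex.ext rfl (by simp [hs_im])
  have htr : (F₀ * (D - D₀)).trace = (((star u ⬝ᵥ D₀⁻¹ *ᵥ u).re⁻¹ *
      ((star (D₀⁻¹ *ᵥ u) ⬝ᵥ D *ᵥ (D₀⁻¹ *ᵥ u)).re - (star u ⬝ᵥ D₀⁻¹ *ᵥ u).re) : ℝ) : ℂ) := by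
    rw [hF₀, hD₀.isHermitian.trace_smul_vecMulVec_inv_mulVec_mul_sub
      ((isUnit_iff_isUnit_det D₀).1 hD₀.isUnit), ← hb, ← hs]
    push_cast
    rfl
  have hcs := hD.norm_sq_dotProduct_le (D₀⁻¹ *ᵥ u) u
  rw [hD₀.isHermitian.star_inv_mulVec_dotProduct, ← hb, Complex.norm_real, Real.norm_eq_abs,
    sq_abs, RCLike.re_to_complex, RCLike.re_to_complex] at hcs
  refine ⟨ha_im.symm, ha_re, hb_im.symm, hb_re, by rw [htr, Complex.ofReal_im], ?_, ?_⟩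
  · rw [htr, Complex.ofReal_re]
    exact Real.log_sub_inv_mul_sub_le_log ha_re hb_re hcs
  · rintro rfl
    simp

/-- MM lower bound (equation (19)): for Hermitian positive definite `D₀, D` and nonzero `u`,
with `F₀ = D₀⁻¹ u (u^H D₀⁻¹ u)⁻¹ u^H D₀⁻¹`, the quadratic forms `u^H D⁻¹ u` and
`u^H D₀⁻¹ u` are positive reals, `tr(F₀ (D − D₀))` is real, and
`log(u^H D⁻¹ u) ≥ log(u^H D₀⁻¹ u) − tr(F₀ (D − D₀))`, with equality when `D = D₀`. -/
theorem mm_log_quadratic_form_lower_bound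
    (n : ℕ) (hn : 0 < n)
    (D₀ D : Matrix (Fin n) (Fin n) ℂ)
    (hD₀ : D₀.PosDef) (hD : D.PosDef)
    (u : Fin n → ℂ) (hu : u ≠ 0)
    (F₀ : Matrix (Fin n) (Fin n) ℂ)
    (hF₀ : F₀ = (star u ⬝ᵥ D₀⁻¹ *ᵥ u)⁻¹ • vecMulVec (D₀⁻¹ *ᵥ u) (star u ᵥ* D₀⁻¹)) :
    (star u ⬝ᵥ D⁻¹ *ᵥ u).im = 0 ∧ 0 < (star u ⬝ᵥ D⁻¹ *ᵥ u).re ∧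
    (star u ⬝ᵥ D₀⁻¹ *ᵥ u).im = 0 ∧ 0 < (star u ⬝ᵥ D₀⁻¹ *ᵥ u).re ∧
    ((F₀ * (D - D₀)).trace).im = 0 ∧
    Real.log (star u ⬝ᵥ D⁻¹ *ᵥ u).re ≥
      Real.log (star u ⬝ᵥ D₀⁻¹ *ᵥ u).re - ((F₀ * (D - D₀)).trace).re ∧
    (D = D₀ →
      Real.log (star u ⬝ᵥ D⁻¹ *ᵥ u).re =
        Real.log (star u ⬝ᵥ D₀⁻¹ *ᵥ u).re - ((F₀ * (D - D₀)).trace).re) :=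
  mm_log_quadratic_form_lower_bound_general n D₀ D hD₀ hD u hu F₀ hF₀
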